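/- arXiv:1711.00430 — 2 statements merged into one kernel-verified Lean document; each statement's English description precedes it below -/
import Mathlib

section
/- Let m : ℝ → ℝ² be smooth with ‖m'(x)‖ > 0 everywhere, let m̃(x) = (½‖m(x)‖², m₁(x), m₂(x), 1) ∈ ℝ⁴ and u(x) = m̃(x)/‖m'(x)‖. Then u takes values in the light cone (uᵀ J u = 0) and u is parametrized by Lorentzian arc-length: u'(x)ᵀ J u'(x) = 1 for all x. -/
open Matrix

noncomputable def JL : Matrix (Fin 4) (Fin 4) ℝ :=
  !![0,0,0,-1; 0,1,0,0; 0,0,1,0; -1,0,0,0]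

/-- The Lorentzian pairing ⟨v,w⟩ = vᵀ J w. -/
noncomputable def pr (v w : Fin 4 → ℝ) : ℝ := v ⬝ᵥ JL.mulVec w

/-- Euclidean norm of a planar vector. -/
noncomputable def nrm (w : Fin 2 → ℝ) : ℝ := Real.sqrt ((w 0)^2 + (w 1)^2)

/-- The lift m̃ = (½‖m‖², m₁, m₂, 1) of a planar curve. -/
noncomputable def lift (m : ℝ → Fin 2 → ℝ) : ℝ → Fin 4 → ℝ := fun x =>
  ![(1/2) * ((m x 0)^2 + (m x 1)^2), m x 0, m x 1, 1]

/-- The normalized lift u = m̃/‖m'‖ lies in the cone and has unit Lorentzian speed. -/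
theorem normalized_lift_arclength (m : ℝ → Fin 2 → ℝ) (hm : ContDiff ℝ (⊤ : ℕ∞) m)
    (hreg : ∀ x, 0 < nrm (deriv m x)) :
    let u : ℝ → Fin 4 → ℝ := fun x => (nrm (deriv m x))⁻¹ • lift m x
    ∀ x, pr (u x) (u x) = 0 ∧ pr (deriv u x) (deriv u x) = 1 := by
  intro u x
  have hm' : ContDiff ℝ (⊤ : ℕ∞) m := hm.of_le (by simp)
  have hdm : ContDiff ℝ (⊤ : ℕ∞) (deriv m) := (contDiff_infty_iff_deriv.mp hm').2
  have hmx : HasDerivAt m (deriv m x) x := ((hm'.differentiable (by simp)) x).hasDerivAt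
  have hdi : ∀ i, HasDerivAt (fun y => m y i) (deriv m x i) x := fun i =>
    hasDerivAt_pi.mp hmx i
  have hpos : 0 < (deriv m x 0)^2 + (deriv m x 1)^2 := by
    have := hreg x
    unfold nrm at this
    exact Real.sqrt_pos.mp this
  have hDi : ∀ i, DifferentiableAt ℝ (fun y => deriv m y i) x := fun i =>
    differentiableAt_pi.mp (hdm.differentiable (by simp) x) i
  have hg : DifferentiableAt ℝ (fun y => (deriv m y 0)^2 + (deriv m y 1)^2) x :=
    ((hDi 0).pow 2).add ((hDi 1).pow 2)
  have hsq : DifferentiableAt ℝ (fun y => nrm (deriv m y)) x := by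
    have heq : (fun y => nrm (deriv m y))
        = fun y => Real.sqrt ((deriv m y 0)^2 + (deriv m y 1)^2) := rfl
    rw [heq]
    exact (Real.hasDerivAt_sqrt (ne_of_gt hpos)).differentiableAt.comp x hg
  have hρ : DifferentiableAt ℝ (fun y => (nrm (deriv m y))⁻¹) x :=
    hsq.inv (ne_of_gt (hreg x))
  have hc : HasDerivAt (fun y => (nrm (deriv m y))⁻¹)
      (deriv (fun y => (nrm (deriv m y))⁻¹) x) x := hρ.hasDerivAt
  set c := deriv (fun y => (nrm (deriv m y))⁻¹) x with hcdef
  set a := nrm (deriv m x) with hadef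
  have ha : 0 < a := hreg x
  have ha2 : a ^ 2 = (deriv m x 0)^2 + (deriv m x 1)^2 := Real.sq_sqrt hpos.le
  set d0 := deriv m x 0
  set d1 := deriv m x 1
  set p := m x 0
  set q := m x 1
  set U : Fin 4 → ℝ :=
    ![c * ((1/2) * (p^2 + q^2)) + a⁻¹ * ((1/2) * (2 * p^1 * d0 + 2 * q^1 * d1)),
      c * p + a⁻¹ * d0, c * q + a⁻¹ * d1, c * 1 + a⁻¹ * 0] with hUdef
  have hU : HasDerivAt u U x := by
    apply hasDerivAt_pi.mpr
    intro i
    fin_cases i <;>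
      simp only [u, lift, Pi.smul_apply, smul_eq_mul, hUdef,
        Matrix.cons_val_zero, Matrix.cons_val_one, Matrix.head_cons,
        Matrix.cons_val_succ, Fin.mk_zero, Fin.mk_one]
    · exact hc.mul ((((hdi 0).pow 2).add ((hdi 1).pow 2)).const_mul (1/2))
    · exact hc.mul (hdi 0)
    · exact hc.mul (hdi 1)
    · exact hc.mul (hasDerivAt_const x (1:ℝ))
  constructor
  · simp only [u, lift, pr, JL, Matrix.mulVec, dotProduct,
      Fin.sum_univ_four, Pi.smul_apply, smul_eq_mul,
      Matrix.cons_val_zero, Matrix.cons_val_one, Matrix.head_cons,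
      Matrix.cons_val_two, Matrix.cons_val_three, Matrix.head_cons, Matrix.tail_cons,
      Matrix.cons_val', Matrix.empty_val',
      Matrix.cons_val_fin_one, Matrix.head_fin_const, of_apply]
    ring
  · rw [hU.deriv]
    have key : a⁻¹ ^ 2 * (d0^2 + d1^2) = 1 := by
      rw [← ha2]
      field_simp
    simp only [pr, JL, Matrix.mulVec, dotProduct, Fin.sum_univ_four, hUdef,
      Matrix.cons_val_zero, Matrix.cons_val_one, Matrix.head_cons,
      Matrix.cons_val_two, Matrix.cons_val_three, Matrix.head_cons, Matrix.tail_cons,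
      Matrix.cons_val', Matrix.empty_val',
      Matrix.cons_val_fin_one, Matrix.head_fin_const, of_apply]
    linear_combination key
end

section
/- Let K(t,x) = ![![0, 1, 0, 0],![k₁, 0, 0, 1],![k₂, 0, 0, 0],![0, k₁, k₂, 0]] and N(t,x) = ![![−r₃, r₁, r₂, 0],![n₁, 0, n₀, r₁],![n₂, −n₀, 0, r₂],![0, n₁, n₂, r₃]] be smooth matrix functions with r₃ = −r₁', n₀ = −r₂', n₁ = k₁r₁ + k₂r₂ + r₃', n₂ = r₂'' + k₂r₁ − k₁r₂ (primes denote ∂/∂x). If the structure equation K_t = N_x + [K,N] holds, then (k₁)_t = (k₁r₁ + k₂r₂ − r₁'')' + k₁r₁' + k₂r₂' and (k₂)_t = (r₂'' + k₂r₁ − k₁r₂)' + k₂r₁' − k₁r₂'. -/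
open Matrix

attribute [local instance] Matrix.normedAddCommGroup Matrix.normedSpace

/-- The k₀ = 1 Lorentzian structure equations: the invariants evolve by
(k₁,k₂)ᵀ_t = P (r₁,r₂)ᵀ. -/
theorem structure_eq_invariant_evolution (k₁ k₂ r₁ r₂ : ℝ → ℝ → ℝ)
    (hk₁ : ContDiff ℝ (⊤ : ℕ∞) (fun p : ℝ × ℝ => k₁ p.1 p.2))
    (hk₂ : ContDiff ℝ (⊤ : ℕ∞) (fun p : ℝ × ℝ => k₂ p.1 p.2))
    (hr₁ : ContDiff ℝ (⊤ : ℕ∞) (fun p : ℝ × ℝ => r₁ p.1 p.2))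
    (hr₂ : ContDiff ℝ (⊤ : ℕ∞) (fun p : ℝ × ℝ => r₂ p.1 p.2)) :
    let r₃ : ℝ → ℝ → ℝ := fun t x => -(deriv (r₁ t) x)
    let n₀ : ℝ → ℝ → ℝ := fun t x => -(deriv (r₂ t) x)
    let n₁ : ℝ → ℝ → ℝ := fun t x =>
      k₁ t x * r₁ t x + k₂ t x * r₂ t x + deriv (r₃ t) x
    let n₂ : ℝ → ℝ → ℝ := fun t x =>
      deriv (deriv (r₂ t)) x + k₂ t x * r₁ t x - k₁ t x * r₂ t x
    let K : ℝ → ℝ → Matrix (Fin 4) (Fin 4) ℝ := fun t x =>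
      !![0, 1, 0, 0;
         k₁ t x, 0, 0, 1;
         k₂ t x, 0, 0, 0;
         0, k₁ t x, k₂ t x, 0]
    let N : ℝ → ℝ → Matrix (Fin 4) (Fin 4) ℝ := fun t x =>
      !![-(r₃ t x), r₁ t x, r₂ t x, 0;
         n₁ t x, 0, n₀ t x, r₁ t x;
         n₂ t x, -(n₀ t x), 0, r₂ t x;
         0, n₁ t x, n₂ t x, r₃ t x]
    (∀ t x, deriv (fun s => K s x) t
        = deriv (fun y => N t y) x + (K t x * N t x - N t x * K t x)) →
    ∀ t x,
      deriv (fun s => k₁ s x) t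
        = deriv (fun y => k₁ t y * r₁ t y + k₂ t y * r₂ t y
            - deriv (deriv (r₁ t)) y) x
          + k₁ t x * deriv (r₁ t) x + k₂ t x * deriv (r₂ t) x ∧
      deriv (fun s => k₂ s x) t
        = deriv (fun y => deriv (deriv (r₂ t)) y + k₂ t y * r₁ t y
            - k₁ t y * r₂ t y) x
          + k₂ t x * deriv (r₁ t) x - k₁ t x * deriv (r₂ t) x := by
  intro r₃ n₀ n₁ n₂ K N h t x
  -- smoothness of slices in x
  have hslice : ∀ (f : ℝ → ℝ → ℝ), ContDiff ℝ (⊤ : ℕ∞) (fun p : ℝ × ℝ => f p.1 p.2) →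
      ContDiff ℝ (⊤ : ℕ∞) (f t) := fun f hf =>
    (hf.comp (contDiff_prodMk_right t)).of_le (by simp)
  have Hk₁ := hslice k₁ hk₁
  have Hk₂ := hslice k₂ hk₂
  have Hr₁ := hslice r₁ hr₁
  have Hr₂ := hslice r₂ hr₂
  have Hr₁' : ContDiff ℝ (⊤ : ℕ∞) (deriv (r₁ t)) := (contDiff_infty_iff_deriv.mp Hr₁).2
  have Hr₂' : ContDiff ℝ (⊤ : ℕ∞) (deriv (r₂ t)) := (contDiff_infty_iff_deriv.mp Hr₂).2
  have Hr₁'' : ContDiff ℝ (⊤ : ℕ∞) (deriv (deriv (r₁ t))) := (contDiff_infty_iff_deriv.mp Hr₁').2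
  have Hr₂'' : ContDiff ℝ (⊤ : ℕ∞) (deriv (deriv (r₂ t))) := (contDiff_infty_iff_deriv.mp Hr₂').2
  have hdt : ∀ (f : ℝ → ℝ → ℝ), ContDiff ℝ (⊤ : ℕ∞) (fun p : ℝ × ℝ => f p.1 p.2) →
      DifferentiableAt ℝ (fun s => f s x) t := fun f hf =>
    ((hf.differentiable (by simp)).comp
      (differentiable_id.prodMk (differentiable_const x))).differentiableAt
  have dk₁ : DifferentiableAt ℝ (fun y => k₁ t y) x :=
    ((contDiff_infty_iff_deriv.mp Hk₁).1 x)
  have dk₂ : DifferentiableAt ℝ (fun y => k₂ t y) x :=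
    ((contDiff_infty_iff_deriv.mp Hk₂).1 x)
  have dr₁ : DifferentiableAt ℝ (fun y => r₁ t y) x :=
    ((contDiff_infty_iff_deriv.mp Hr₁).1 x)
  have dr₂ : DifferentiableAt ℝ (fun y => r₂ t y) x :=
    ((contDiff_infty_iff_deriv.mp Hr₂).1 x)
  have dr₁' : DifferentiableAt ℝ (deriv (r₁ t)) x :=
    ((contDiff_infty_iff_deriv.mp Hr₁').1 x)
  have dr₂' : DifferentiableAt ℝ (deriv (r₂ t)) x :=
    ((contDiff_infty_iff_deriv.mp Hr₂').1 x)
  have dr₁'' : DifferentiableAt ℝ (deriv (deriv (r₁ t))) x :=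
    ((contDiff_infty_iff_deriv.mp Hr₁'').1 x)
  have dr₂'' : DifferentiableAt ℝ (deriv (deriv (r₂ t))) x :=
    ((contDiff_infty_iff_deriv.mp Hr₂'').1 x)
  have er₃ : deriv (r₃ t) = fun y => -(deriv (deriv (r₁ t)) y) := by
    funext y; exact deriv.neg
  have dr₃ : DifferentiableAt ℝ (fun y => r₃ t y) x := dr₁'.neg
  have dn₀ : DifferentiableAt ℝ (fun y => n₀ t y) x := dr₂'.neg
  have dr₃' : DifferentiableAt ℝ (fun y => deriv (r₃ t) y) x := by
    rw [show (fun y => deriv (r₃ t) y) = deriv (r₃ t) from rfl, er₃]; exact dr₁''.neg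
  have dn₁ : DifferentiableAt ℝ (fun y => n₁ t y) x :=
    ((dk₁.mul dr₁).add (dk₂.mul dr₂)).add dr₃'
  have dn₂ : DifferentiableAt ℝ (fun y => n₂ t y) x :=
    (dr₂''.add (dk₂.mul dr₁)).sub (dk₁.mul dr₂)
  -- entrywise derivative of the matrix functions
  have hKd : HasDerivAt (fun s => K s x) (fun i j => deriv (fun s => K s x i j) t) t := by
    refine hasDerivAt_pi.2 fun i => ?_; refine hasDerivAt_pi.2 fun j => ?_
    apply DifferentiableAt.hasDerivAt
    fin_cases i <;> fin_cases j <;> simp [K] <;>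
      first
        | exact differentiableAt_const _
        | exact hdt k₁ hk₁
        | exact hdt k₂ hk₂
  have hNd : HasDerivAt (fun y => N t y) (fun i j => deriv (fun y => N t y i j) x) x := by
    refine hasDerivAt_pi.2 fun i => ?_; refine hasDerivAt_pi.2 fun j => ?_
    apply DifferentiableAt.hasDerivAt
    fin_cases i <;> fin_cases j <;> simp [N] <;>
      first
        | exact differentiableAt_const _
        | exact dr₃
        | exact dr₃.neg
        | exact dr₁
        | exact dr₂
        | exact dn₀
        | exact dn₀.neg
        | exact dn₁
        | exact dn₂
  have h' := h t x
  rw [show deriv (fun s => K s x) t = _ from hKd.deriv,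
    show deriv (fun y => N t y) x = _ from hNd.deriv] at h'
  have h10 : deriv (fun s => K s x 1 0) t = deriv (fun y => N t y 1 0) x
      + ((K t x * N t x) 1 0 - (N t x * K t x) 1 0) := congrFun (congrFun h' 1) 0
  have h20 : deriv (fun s => K s x 2 0) t = deriv (fun y => N t y 2 0) x
      + ((K t x * N t x) 2 0 - (N t x * K t x) 2 0) := congrFun (congrFun h' 2) 0
  have eK1 : (fun s => K s x 1 0) = fun s => k₁ s x := by
    funext s; simp [K]
  have eK2 : (fun s => K s x 2 0) = fun s => k₂ s x := by
    funext s; simp [K]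
  have eN1 : (fun y => N t y 1 0)
      = fun y => k₁ t y * r₁ t y + k₂ t y * r₂ t y - deriv (deriv (r₁ t)) y := by
    funext y
    simp only [N, n₁, r₃]
    simp [deriv.neg]
    try ring
  have eN2 : (fun y => N t y 2 0)
      = fun y => deriv (deriv (r₂ t)) y + k₂ t y * r₁ t y - k₁ t y * r₂ t y := by
    funext y; simp [N, n₂]
  have eC1 : (K t x * N t x) 1 0 - (N t x * K t x) 1 0
      = k₁ t x * deriv (r₁ t) x + k₂ t x * deriv (r₂ t) x := by
    simp [K, N, Matrix.mul_apply, Fin.sum_univ_four, r₃, n₀]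
    try ring
  have eC2 : (K t x * N t x) 2 0 - (N t x * K t x) 2 0
      = k₂ t x * deriv (r₁ t) x - k₁ t x * deriv (r₂ t) x := by
    simp [K, N, Matrix.mul_apply, Fin.sum_univ_four, r₃, n₀]
    try ring
  rw [eK1, eN1, eC1] at h10
  rw [eK2, eN2, eC2] at h20
  exact ⟨by rw [h10]; ring, by rw [h20]; ring⟩
end
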